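/- Truncated exponential approximation: Let D be a complex number with |D| ≤ V for some V ≥ 1. Then exp(2·Re D) = (1 + O(e^{-9V}))·|∑_{j ≤ 10V} D^j/j!|², where the implied constant is absolute. -/

import Mathlib

/-!
With `N = ⌊10V⌋ + 1 > 10V ≥ 2|D|`, the tail of the exponential series beyond `N` is at most
`2|D|^N/N!`, and the bound `x^N/N! ≤ e^{tx}/t^N` with `t = e²` (using `e² < 10`) makes this at most
`2e^{-10V}`. So the partial sum `S` satisfies `| |S| - e^{Re D} | ≤ 2e^{-10V}`, while
`e^{Re D} ≥ e^{-V}`. Squaring a relative error `ε/a ≤ 1/2` costs only a constant factor: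
`|a² - s²| = |a - s|(a + s) ≤ 6(ε/a)s²`, which gives the constant `12`.
-/

open Finset Real

lemma pow_div_factorial_le_exp_mul_div_pow {x t : ℝ} (hx : 0 ≤ x) (ht : 0 < t) (n : ℕ) :
    x ^ n / n.factorial ≤ exp (t * x) / t ^ n := by
  rw [le_div_iff₀ (by positivity), div_mul_eq_mul_div, ← mul_pow, mul_comm x]
  exact pow_div_factorial_le_exp _ (by positivity) n

lemma exp_two_lt_ten : exp 2 < 10 := by
  have h : exp 2 = exp 1 ^ 2 := by rw [← exp_nat_mul]; norm_num
  rw [h]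
  nlinarith [exp_one_lt_d9, exp_pos 1]

lemma norm_exp_sub_sum_range_le {V : ℝ} {n : ℕ} {D : ℂ} (hD : ‖D‖ ≤ V) (hn : 10 * V ≤ n) :
    ‖Complex.exp D - ∑ j ∈ range n, D ^ j / j.factorial‖ ≤ 2 * exp (-10 * V) := by
  have hV : 0 ≤ V := (norm_nonneg D).trans hD
  have hratio : ‖D‖ / n.succ ≤ 1 / 2 := by
    rw [div_le_iff₀ (by positivity)]
    push_cast
    linarith
  calc ‖Complex.exp D - ∑ j ∈ range n, D ^ j / j.factorial‖
      ≤ ‖D‖ ^ n / n.factorial * 2 := Complex.exp_bound' hratio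
    _ ≤ exp (exp 2 * V) / exp 2 ^ n * 2 := by
      refine mul_le_mul_of_nonneg_right ?_ zero_le_two
      exact (div_le_div_of_nonneg_right (pow_le_pow_left₀ (norm_nonneg D) hD n)
        (by positivity)).trans (pow_div_factorial_le_exp_mul_div_pow hV (exp_pos 2) n)
    _ = 2 * exp (exp 2 * V - 2 * n) := by
      rw [← exp_nat_mul, exp_sub]; ring_nf
    _ ≤ 2 * exp (-10 * V) := by
      gcongr
      nlinarith [exp_two_lt_ten]

lemma abs_sq_sub_sq_le_of_abs_sub_le {a s ε : ℝ} (ha : 0 < a) (has : |a - s| ≤ ε)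
    (hε : ε ≤ a / 2) : |a ^ 2 - s ^ 2| ≤ 6 * (ε / a) * s ^ 2 := by
  have hs : a / 2 ≤ s := by linarith [(abs_le.mp has).2]
  have hε0 : 0 ≤ ε := (abs_nonneg _).trans has
  calc |a ^ 2 - s ^ 2| = |a - s| * (a + s) := by
        rw [sq_sub_sq, abs_mul, abs_of_pos (by linarith : 0 < a + s), mul_comm]
    _ ≤ ε * (3 * s) := mul_le_mul has (by linarith) (by linarith) hε0
    _ ≤ 6 * (ε / a) * s ^ 2 := by
      rw [show 6 * (ε / a) * s ^ 2 = 6 * ε * s ^ 2 / a by ring, le_div_iff₀ ha]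
      nlinarith [mul_nonneg hε0 (by linarith : 0 ≤ s)]

theorem truncated_exponential_approximation :
    ∃ C : ℝ, 0 < C ∧ ∀ V : ℝ, 1 ≤ V → ∀ D : ℂ, ‖D‖ ≤ V →
      |Real.exp (2 * D.re) -
          ‖∑ j ∈ Finset.range (⌊10 * V⌋₊ + 1), D ^ j / (Nat.factorial j)‖ ^ 2| ≤
        C * Real.exp (-9 * V) *
          ‖∑ j ∈ Finset.range (⌊10 * V⌋₊ + 1), D ^ j / (Nat.factorial j)‖ ^ 2 := by
  refine ⟨12, by norm_num, fun V hV D hD => ?_⟩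
  set S := ∑ j ∈ range (⌊10 * V⌋₊ + 1), D ^ j / (j.factorial : ℂ)
  have hre : -V ≤ D.re := by linarith [neg_abs_le D.re, Complex.abs_re_le_norm D]
  have hdiff : |exp D.re - ‖S‖| ≤ 2 * exp (-10 * V) := by
    rw [← Complex.norm_exp]
    refine (abs_norm_sub_norm_le _ _).trans (norm_exp_sub_sum_range_le hD ?_)
    push_cast
    exact (Nat.lt_floor_add_one _).le
  have hsmall : 2 * exp (-10 * V) ≤ exp D.re / 2 := by
    have h4 : 4 ≤ exp (9 * V) := by linarith [add_one_le_exp (9 * V)]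
    have : 4 * exp (-10 * V) ≤ exp (-V) := by
      rw [show -V = 9 * V + -10 * V by ring, exp_add]
      gcongr
    linarith [exp_le_exp.2 hre]
  have hratio : 2 * exp (-10 * V) / exp D.re ≤ 2 * exp (-9 * V) := by
    rw [div_le_iff₀ (exp_pos _), mul_assoc, ← exp_add]
    gcongr
    linarith
  calc |exp (2 * D.re) - ‖S‖ ^ 2| = |exp D.re ^ 2 - ‖S‖ ^ 2| := by rw [← exp_nat_mul]; norm_num
    _ ≤ 6 * (2 * exp (-10 * V) / exp D.re) * ‖S‖ ^ 2 :=
      abs_sq_sub_sq_le_of_abs_sub_le (exp_pos _) hdiff hsmall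
    _ ≤ 6 * (2 * exp (-9 * V)) * ‖S‖ ^ 2 := by gcongr
    _ = 12 * exp (-9 * V) * ‖S‖ ^ 2 := by ring
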